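/- Let 𝓡 = 𝓡(ℝ,𝔽) with 𝔽 an algebraically closed field, and let A ∈ 𝓡̄^{n×n} be an ELT matrix whose rows are linearly dependent. Then there exists an ELT matrix B with all entries in 𝓡^× ∪ {−∞} such that A ⊨ B entrywise and the rows of B are linearly dependent. -/

import Mathlib

/-- The ELT algebra `𝓡(F, L)` together with an adjoined `−∞` element:
`bot` represents `−∞`, and `elt a ℓ` represents the element `[ℓ]a`
with tangible value `a ∈ F` and layer `ℓ ∈ L`.  Thus `ELT F L` plays the
role of `𝓡̄ = 𝓡 ∪ {−∞}`. -/
inductive ELT (F : Type) (L : Type) : Type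
  | bot : ELT F L
  | elt : F → L → ELT F L

namespace ELT

variable {F : Type} {L : Type}

/-- The sorting map `s : 𝓡̄ → L`, with `s (−∞) = 0`. -/
def s [Zero L] : ELT F L → L
  | bot => 0
  | elt _ ℓ => ℓ

/-- The tangible value `t : 𝓡̄ → F ∪ {−∞}`, with `t (−∞) = −∞ = ⊥`. -/
def t : ELT F L → WithBot F
  | bot => ⊥
  | elt a _ => (a : WithBot F)

/-- `−∞` is the additive identity of `𝓡̄`, so we register it as the zero. -/
instance : Zero (ELT F L) := ⟨bot⟩

/-- The multiplicative identity `[1]0`. -/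
instance [Zero F] [One L] : One (ELT F L) := ⟨elt 0 1⟩

/-- Addition on `𝓡̄`: the element with larger tangible value wins, and layers
add in case of a tie; `−∞` is neutral. -/
instance [LinearOrder F] [Add L] : Add (ELT F L) where
  add x y :=
    match x, y with
    | bot, y => y
    | x, bot => x
    | elt a ℓ, elt b k => if a < b then elt b k else if b < a then elt a ℓ else elt a (ℓ + k)

/-- Multiplication on `𝓡̄`: tangible values add, layers multiply; `−∞` is absorbing. -/
instance [Add F] [Mul L] : Mul (ELT F L) where
  mul x y :=
    match x, y with
    | bot, _ => bot
    | _, bot => bot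
    | elt a ℓ, elt b k => elt (a + b) (ℓ * k)

/-- The surpassing relation `x ⊨ y` on `𝓡̄`: `x = y + z` for some zero-layered `z`. -/
def Surpass [LinearOrder F] [Add L] [Zero L] (x y : ELT F L) : Prop :=
  ∃ z : ELT F L, s z = 0 ∧ x = y + z

/-- `x ∈ 𝓡^× ∪ {−∞}`: either `x = −∞` or `x` has nonzero layer. -/
def TangibleOrBot [Zero L] (x : ELT F L) : Prop :=
  x = bot ∨ s x ≠ 0

/-- The sum of a finite family of elements of `𝓡̄`. -/
def fsum [LinearOrder F] [Add L] {m : ℕ} (f : Fin m → ELT F L) : ELT F L :=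
  (List.ofFn f).sum

/-- A finite family of vectors in `𝓡̄ⁿ` is linearly dependent if there are
coefficients in `𝓡^× ∪ {−∞}`, not all `−∞`, such that the corresponding linear
combination is zero-layered in every coordinate (equivalently, some subfamily
admits a combination with all coefficients in `𝓡^×` which is zero-layered
everywhere). -/
def LinDep [LinearOrder F] [Zero L] [Add L] [Add F] [Mul L] {m n : ℕ}
    (v : Fin m → Fin n → ELT F L) : Prop :=
  ∃ a : Fin m → ELT F L, (∀ i, TangibleOrBot (a i)) ∧ (∃ i, a i ≠ bot) ∧
    ∀ j : Fin n, s (fsum fun i => a i * v i j) = 0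

/-- The ELT determinant of a square ELT matrix. -/
noncomputable def det {n : ℕ} [LinearOrder F] [Add F] [Zero F] [Ring L]
    (A : Matrix (Fin n) (Fin n) (ELT F L)) : ELT F L :=
  ((Finset.univ : Finset (Equiv.Perm (Fin n))).toList.map fun σ =>
    elt 0 (((Equiv.Perm.sign σ : ℤˣ) : ℤ) : L) * (List.ofFn fun i => A i (σ i)).prod).sum

/-- The EL tropicalization of a Hahn (generalized Puiseux) series: `0 ↦ −∞`,
and a nonzero series with leading monomial `ℓ tᵃ` goes to `[ℓ](−a)`. -/
noncomputable def ELTrop [AddCommGroup F] [LinearOrder F] [IsOrderedAddMonoid F] [Zero L] (x : HahnSeries F L) : ELT F L :=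
  open scoped Classical in
  if x = 0 then bot else elt (-x.order) (x.coeff x.order)

end ELT

/-!
The coefficient vector `a` of the dependence is kept and each column `v` is repaired separately.
Replacing the zero-layered entries of `v` by `−∞` gives a column surpassed by `v` with entries in
`𝓡^× ∪ {−∞}`. If the combination `∑ aᵢ vᵢ` is still zero-layered we are done. Otherwise the dropped
zero-layered terms must have dominated the remaining sum `[S]m`, so one of them, `a_{i₀} v_{i₀}`,
lies strictly above level `m`. Putting at `i₀` the tangible entry `c` with `a_{i₀} c = [−S]m`
cancels the layer at level `m`, and `v_{i₀}` still surpasses `c` because `c` lies below it.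
-/

namespace ELT

variable {F L : Type}

section Add

variable [LinearOrder F] [AddCommMonoid L]

@[simp] lemma bot_add (x : ELT F L) : bot + x = x := by cases x <;> rfl

@[simp] lemma add_bot (x : ELT F L) : x + bot = x := by cases x <;> rfl

lemma elt_add_elt (a b : F) (ℓ k : L) :
    elt a ℓ + elt b k = if a < b then elt b k else if b < a then elt a ℓ else elt a (ℓ + k) :=
  rfl

instance : AddCommMonoid (ELT F L) where
  add_assoc x y z := by
    cases x with
    | bot => simp only [bot_add]
    | elt a ℓ =>
    cases y with
    | bot => simp only [bot_add, add_bot]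
    | elt b k =>
    cases z with
    | bot => simp only [add_bot]
    | elt c m =>
    simp only [elt_add_elt]
    split_ifs <;> simp only [elt_add_elt] <;> split_ifs <;> first | rfl | order | rw [add_assoc]
  zero_add := bot_add
  add_zero := add_bot
  add_comm x y := by
    cases x <;> cases y <;> simp only [bot_add, add_bot, elt_add_elt]
    split_ifs <;> first | rfl | order | (rw [add_comm]; congr 1; order)
  nsmul := nsmulRec

lemma fsum_eq_sum {m : ℕ} (f : Fin m → ELT F L) : fsum f = ∑ i, f i :=
  List.sum_ofFn

lemma t_add (x y : ELT F L) : t (x + y) = max (t x) (t y) := by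
  cases x with
  | bot => simp [t]
  | elt a ℓ =>
  cases y with
  | bot => simp [t]
  | elt b k =>
  simp only [elt_add_elt]
  split_ifs <;> simp only [t] <;> congr 1 <;> order

lemma t_sum {ι : Type*} (u : Finset ι) (f : ι → ELT F L) :
    t (∑ i ∈ u, f i) = u.sup fun i => t (f i) := by
  classical
  induction u using Finset.induction_on with
  | empty => rfl
  | insert i u hi ih => rw [Finset.sum_insert hi, Finset.sup_insert, t_add, ih]

lemma s_add_eq_zero {x y : ELT F L} (hx : s x = 0) (hy : s y = 0) : s (x + y) = 0 := by
  cases x with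
  | bot => simpa
  | elt a ℓ =>
  cases y with
  | bot => simpa
  | elt b k =>
  simp only [s] at hx hy
  simp only [elt_add_elt]
  split_ifs <;> simp [s, hx, hy]

lemma s_sum_eq_zero {ι : Type*} {u : Finset ι} {f : ι → ELT F L} (h : ∀ i ∈ u, s (f i) = 0) :
    s (∑ i ∈ u, f i) = 0 :=
  Finset.sum_induction f (fun x => s x = 0) (fun _ _ => s_add_eq_zero) rfl h

lemma t_lt_of_s_add_eq_zero {x y : ELT F L} (hx : s x ≠ 0) (hy : s y = 0) (h : s (x + y) = 0) :
    t x < t y := by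
  cases x with
  | bot => exact absurd rfl hx
  | elt a ℓ =>
  cases y with
  | bot => simp_all
  | elt b k =>
  simp only [s] at hx hy
  simp only [elt_add_elt] at h
  split_ifs at h with hab hba
  · exact WithBot.coe_lt_coe.2 hab
  · exact absurd h hx
  · simp [s, hx, hy] at h

lemma surpass_self (x : ELT F L) : Surpass x x :=
  ⟨bot, rfl, (add_bot x).symm⟩

lemma surpass_bot {x : ELT F L} (hx : s x = 0) : Surpass x bot :=
  ⟨x, hx, (bot_add x).symm⟩

lemma surpass_of_t_lt {x y : ELT F L} (hx : s x = 0) (h : t y < t x) : Surpass x y := by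
  refine ⟨x, hx, ?_⟩
  cases y with
  | bot => simp
  | elt b k =>
  cases x with
  | bot => simp [t] at h
  | elt a ℓ => rw [elt_add_elt, if_pos (WithBot.coe_lt_coe.1 h)]

end Add

section Mul

@[simp] lemma bot_mul [Add F] [Mul L] (x : ELT F L) : bot * x = bot := rfl

@[simp] lemma mul_bot [Add F] [Mul L] (x : ELT F L) : x * bot = bot := by cases x <;> rfl

lemma elt_mul_elt [Add F] [Mul L] (a b : F) (ℓ k : L) : elt a ℓ * elt b k = elt (a + b) (ℓ * k) :=
  rfl

lemma s_mul [Add F] [MulZeroClass L] (x y : ELT F L) : s (x * y) = s x * s y := by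
  cases x <;> cases y <;> simp [s]

lemma t_mul [Add F] [Mul L] (x y : ELT F L) : t (x * y) = t x + t y := by
  cases x <;> cases y <;> simp [t]

lemma sum_mul_update_of_eq_bot [LinearOrder F] [Add F] [AddCommMonoid L] [Mul L] {ι : Type*}
    [Fintype ι] [DecidableEq ι] (a b : ι → ELT F L) {i₀ : ι} (hb : b i₀ = bot) (c : ELT F L) :
    ∑ i, a i * Function.update b i₀ c i = ∑ i, a i * b i + a i₀ * c := by
  have hupd : (fun i => a i * Function.update b i₀ c i) =
      Function.update (fun i => a i * b i) i₀ (a i₀ * c) :=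
    funext <| Function.apply_update (fun i y => a i * y) b i₀ c
  rw [hupd, Finset.sum_update_of_mem (Finset.mem_univ i₀), Finset.sdiff_singleton_eq_erase,
    Finset.sum_erase _ (by simp [hb]; rfl), add_comm]

end Mul

lemma t_ne_bot_of_s_ne_zero [Zero L] {x : ELT F L} (hx : s x ≠ 0) : t x ≠ ⊥ := by
  cases x <;> simp_all [s, t]

section TangiblePart

variable [Zero L]

open scoped Classical in
noncomputable def tangiblePart (x : ELT F L) : ELT F L :=
  if s x = 0 then bot else x

lemma tangiblePart_of_s_eq_zero {x : ELT F L} (hx : s x = 0) : tangiblePart x = bot :=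
  if_pos hx

lemma tangiblePart_of_s_ne_zero {x : ELT F L} (hx : s x ≠ 0) : tangiblePart x = x :=
  if_neg hx

lemma tangibleOrBot_tangiblePart (x : ELT F L) : TangibleOrBot (tangiblePart x) := by
  by_cases hx : s x = 0
  · exact Or.inl (tangiblePart_of_s_eq_zero hx)
  · exact Or.inr (by rwa [tangiblePart_of_s_ne_zero hx])

end TangiblePart

lemma surpass_tangiblePart [LinearOrder F] [AddCommMonoid L] (x : ELT F L) :
    Surpass x (tangiblePart x) := by
  by_cases hx : s x = 0
  · rw [tangiblePart_of_s_eq_zero hx]; exact surpass_bot hx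
  · rw [tangiblePart_of_s_ne_zero hx]; exact surpass_self x

lemma sum_mul_eq_sum_mul_tangiblePart_add [LinearOrder F] [Add F] [AddCommMonoid L] [Mul L]
    {ι : Type*} [Fintype ι] (a v : ι → ELT F L) [DecidablePred fun i => s (v i) = 0] :
    ∑ i, a i * v i =
      ∑ i, a i * tangiblePart (v i) + ∑ i ∈ Finset.univ.filter fun i => s (v i) = 0, a i * v i := by
  rw [← Finset.sum_filter_not_add_sum_filter Finset.univ (fun i => s (v i) = 0), Finset.sum_filter]
  congr 1
  refine Finset.sum_congr rfl fun i _ => ?_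
  by_cases hi : s (v i) = 0
  · rw [if_neg (not_not.2 hi), tangiblePart_of_s_eq_zero hi, mul_bot]; rfl
  · rw [if_pos hi, tangiblePart_of_s_ne_zero hi]

variable [LinearOrder F] [AddCommGroup F] [DivisionRing L]

lemma exists_s_add_mul_eq_zero {x a : ELT F L} (hx : s x ≠ 0) (ha : s a ≠ 0) :
    ∃ c : ELT F L, s c ≠ 0 ∧ t (a * c) = t x ∧ s (x + a * c) = 0 := by
  cases x with
  | bot => exact absurd rfl hx
  | elt m S =>
  cases a with
  | bot => exact absurd rfl ha
  | elt α κ =>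
  simp only [s] at hx ha
  refine ⟨elt (m - α) (-(κ⁻¹ * S)), by simp [s, hx, ha], by simp [t], ?_⟩
  simp [elt_mul_elt, elt_add_elt, s, ha]

variable [IsOrderedAddMonoid F]

lemma exists_s_sum_mul_update_eq_zero {ι : Type*} [Fintype ι] [DecidableEq ι]
    {a v b : ι → ELT F L} {i₀ : ι} (hb : b i₀ = bot) (hv : s (v i₀) = 0) (ha : s (a i₀) ≠ 0)
    (hS : s (∑ i, a i * b i) ≠ 0) (hlt : t (∑ i, a i * b i) < t (a i₀ * v i₀)) :
    ∃ c : ELT F L, s c ≠ 0 ∧ Surpass (v i₀) c ∧ s (∑ i, a i * Function.update b i₀ c i) = 0 := by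
  obtain ⟨c, hc, htc, hsc⟩ := exists_s_add_mul_eq_zero hS ha
  refine ⟨c, hc, surpass_of_t_lt hv ?_, by rwa [sum_mul_update_of_eq_bot a b hb]⟩
  rw [← htc, t_mul, t_mul] at hlt
  exact (WithBot.add_lt_add_iff_left (t_ne_bot_of_s_ne_zero ha)).1 hlt

theorem exists_tangibleOrBot_surpassed_of_s_sum_eq_zero {ι : Type*} [Fintype ι]
    {a v : ι → ELT F L} (ha : ∀ i, TangibleOrBot (a i)) (h : s (∑ i, a i * v i) = 0) :
    ∃ b : ι → ELT F L, (∀ i, TangibleOrBot (b i)) ∧ (∀ i, Surpass (v i) (b i)) ∧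
      s (∑ i, a i * b i) = 0 := by
  classical
  set b₀ : ι → ELT F L := fun i => tangiblePart (v i)
  by_cases h₀ : s (∑ i, a i * b₀ i) = 0
  · exact ⟨b₀, fun i => tangibleOrBot_tangiblePart _, fun i => surpass_tangiblePart _, h₀⟩
  set Z := Finset.univ.filter fun i => s (v i) = 0
  have hZ : s (∑ i ∈ Z, a i * v i) = 0 :=
    s_sum_eq_zero fun i hi => by simp [s_mul, (Finset.mem_filter.1 hi).2]
  have hlt : t (∑ i, a i * b₀ i) < t (∑ i ∈ Z, a i * v i) :=
    t_lt_of_s_add_eq_zero h₀ hZ (sum_mul_eq_sum_mul_tangiblePart_add a v ▸ h)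
  rw [t_sum Z, Finset.lt_sup_iff] at hlt
  obtain ⟨i₀, hi₀Z, hi₀⟩ := hlt
  have hvi₀ : s (v i₀) = 0 := (Finset.mem_filter.1 hi₀Z).2
  have hai₀ : s (a i₀) ≠ 0 := (ha i₀).resolve_left fun hbot => by simp [hbot, t] at hi₀
  obtain ⟨c, hc, hvc, hsc⟩ :=
    exists_s_sum_mul_update_eq_zero (b := b₀) (tangiblePart_of_s_eq_zero hvi₀) hvi₀ hai₀ h₀ hi₀
  refine ⟨Function.update b₀ i₀ c, ?_, ?_, hsc⟩
  · exact (Function.forall_update_iff b₀ fun _ y => TangibleOrBot y).2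
      ⟨Or.inr hc, fun i _ => tangibleOrBot_tangiblePart _⟩
  · exact (Function.forall_update_iff b₀ fun i y => Surpass (v i) y).2
      ⟨hvc, fun i _ => surpass_tangiblePart _⟩

theorem LinDep.exists_tangibleOrBot_surpassed {m n : ℕ} {v : Fin m → Fin n → ELT F L}
    (hv : LinDep v) :
    ∃ w : Fin m → Fin n → ELT F L, (∀ i j, TangibleOrBot (w i j)) ∧
      (∀ i j, Surpass (v i j) (w i j)) ∧ LinDep w := by
  obtain ⟨a, ha, hne, hsum⟩ := hv
  have hcol (j : Fin n) := exists_tangibleOrBot_surpassed_of_s_sum_eq_zero (v := fun i => v i j) ha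
    (by simpa [fsum_eq_sum] using hsum j)
  choose w hw hvw hsw using hcol
  exact ⟨fun i j => w j i, fun i j => hw j i, fun i j => hvw j i, a, ha, hne,
    fun j => by simpa [fsum_eq_sum] using hsw j⟩

end ELT

theorem stmt5_general {𝔽 : Type} [Field 𝔽] {n : ℕ}
    (A : Matrix (Fin n) (Fin n) (ELT ℝ 𝔽))
    (hA : ELT.LinDep (fun i j => A i j)) :
    ∃ B : Matrix (Fin n) (Fin n) (ELT ℝ 𝔽),
      (∀ i j, ELT.TangibleOrBot (B i j)) ∧
      (∀ i j, ELT.Surpass (A i j) (B i j)) ∧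
      ELT.LinDep (fun i j => B i j) := by
  obtain ⟨B, hB, hAB, hdep⟩ := hA.exists_tangibleOrBot_surpassed
  exact ⟨Matrix.of B, hB, hAB, hdep⟩

/-- Every ELT matrix with linearly dependent rows surpasses (entrywise) a matrix
with entries in `𝓡^× ∪ {−∞}` whose rows are linearly dependent. -/
theorem stmt5 {𝔽 : Type} [Field 𝔽] [IsAlgClosed 𝔽] {n : ℕ}
    (A : Matrix (Fin n) (Fin n) (ELT ℝ 𝔽))
    (hA : ELT.LinDep (fun i j => A i j)) :
    ∃ B : Matrix (Fin n) (Fin n) (ELT ℝ 𝔽),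
      (∀ i j, ELT.TangibleOrBot (B i j)) ∧
      (∀ i j, ELT.Surpass (A i j) (B i j)) ∧
      ELT.LinDep (fun i j => B i j) :=
  stmt5_general A hA
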